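/- Let G be a connected directed graph in which every vertex has total degree 2 (so G is a single cycle as an undirected graph, cyclomatic number 1) and G has no directed circuit. Then N(G) = Σ_{v minimal} x_v − Σ_{v' maximal} x_{v'}, where minimal (resp. maximal) vertices are those that are not the end (resp. origin) of any edge. -/

import Mathlib

open scoped BigOperators

/-- The field of rational functions in variables indexed by `V` over `ℚ`. -/
abbrev K (V : Type) : Type := FractionRing (MvPolynomial V ℚ)

/-- The variable `x_v` seen inside the field of rational functions. -/
noncomputable def xv {V : Type} (v : V) : K V :=
  algebraMap (MvPolynomial V ℚ) (K V) (MvPolynomial.X v)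

/-- `ψ_w = 1 / ∏ (x_{w_i} - x_{w_{i+1}})` for a word `w`. -/
noncomputable def psi {V : Type} (w : List V) : K V :=
  (((w.zip w.tail).map fun p => xv p.1 - xv p.2).prod)⁻¹

/-- The word (list of vertices) associated to an enumeration `σ` of the vertex set `W`. -/
def wordOf {V : Type} (W : Finset V) (σ : Fin W.card ≃ W) : List V :=
  (List.finRange W.card).map fun i => ((σ i : W) : V)

/-- `σ` enumerates `W` in an order compatible with all edges of `E`:
the origin of every edge appears before its end. -/
def IsExt {V : Type} (W : Finset V) (E : Finset (V × V)) (σ : Fin W.card ≃ W) : Prop :=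
  ∀ e ∈ E, ∃ i j : Fin W.card, i < j ∧ ((σ i : W) : V) = e.1 ∧ ((σ j : W) : V) = e.2

instance {V : Type} [DecidableEq V] (W : Finset V) (E : Finset (V × V)) (σ : Fin W.card ≃ W) :
    Decidable (IsExt W E σ) := by unfold IsExt; exact inferInstance

/-- `Ψ(G) = Σ_{w ∈ L(G)} ψ_w`, the sum over linear extensions of the graph with
vertex set `W` and edge set `E`. -/
noncomputable def PsiG {V : Type} [DecidableEq V] (W : Finset V) (E : Finset (V × V)) : K V :=
  ∑ σ : Fin W.card ≃ W, if IsExt W E σ then psi (wordOf W σ) else 0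

/-- `N(G) = Ψ(G) ⬝ ∏_{(a,b) ∈ E} (x_a - x_b)`. -/
noncomputable def NG {V : Type} [DecidableEq V] (W : Finset V) (E : Finset (V × V)) : K V :=
  PsiG W E * ∏ e ∈ E, (xv e.1 - xv e.2)

/-- `φ(G)`, the formal sum of the linear extensions of `G` in the free abelian
group on words. -/
noncomputable def phiG {V : Type} [DecidableEq V] (W : Finset V) (E : Finset (V × V)) :
    List V →₀ ℤ :=
  ∑ σ : Fin W.card ≃ W, if IsExt W E σ then Finsupp.single (wordOf W σ) 1 else 0

/-- The graph has no directed circuit. -/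
def Acyclic {V : Type} (E : Finset (V × V)) : Prop :=
  ∀ v : V, ¬ Relation.TransGen (fun a b => (a, b) ∈ E) v v

/-- The underlying undirected simple graph of the directed graph with edge set `E`. -/
def undirected {V : Type} (E : Finset (V × V)) : SimpleGraph V :=
  SimpleGraph.fromRel fun a b => (a, b) ∈ E

/-- The cyclically-consecutive pairs of a list of vertices. -/
def cyclePairs {V : Type} [DecidableEq V] (vs : List V) : Finset (V × V) :=
  Finset.image (fun i : Fin vs.length => (vs.get i, vs.get (finRotate _ i))) Finset.univ

/-- `vs` is (the vertex list of) a cycle of the graph `E`, whose set of forward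
edges (edges traversed in their graph orientation) is `HE`. -/
def IsCycle {V : Type} [DecidableEq V] (E : Finset (V × V)) (vs : List V)
    (HE : Finset (V × V)) : Prop :=
  2 ≤ vs.length ∧ vs.Nodup ∧ HE ⊆ cyclePairs vs ∧ HE ⊆ E ∧
    ∀ p ∈ cyclePairs vs, p ∉ HE → (p.2, p.1) ∈ E

/-!
A connected graph all of whose vertices have degree `2` is a cycle `c 0, …, c (n - 1)`, each of
whose edges is oriented one way or the other. Since every vertex has total degree `2`, the
right-hand side equals `½ ∑_{(a,b) ∈ E} (x_a - x_b)`.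

Deleting one edge of the cycle leaves a path, and `N` of a path is `1`: hanging a new leaf `z`
below `m` multiplies `Ψ` by `1 / (x_m - x_z)`, because the words obtained by inserting `z` into `w`
anywhere after `m` have `ψ`-sum `ψ_w / (x_m - x_z)`. Every linear extension puts `a` either before
or after `b`, so `Ψ(T + ab) + Ψ(T + ba) = Ψ(T)`; with `N(T) = 1` this shows that reversing the
edge `ab` of the cycle changes `N` by `x_a - x_b`, exactly as it changes `½ ∑ (x_a - x_b)`.
Reversing the edges one at a time reduces the claim to the directed cycle, where both sides vanish.
-/

open scoped List

namespace List

variable {α : Type*}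

lemma pair_sublist_cons_iff {a b y : α} {l : List α} :
    [a, b] <+ y :: l ↔ [a, b] <+ l ∨ (a = y ∧ b ∈ l) := by
  simp [sublist_cons_iff]

lemma not_pair_sublist_cons {a b : α} {l : List α} (hab : a ≠ b) (hb : b ∉ l) :
    ¬[a, b] <+ b :: l := by
  rw [pair_sublist_cons_iff]
  rintro (h | ⟨rfl, -⟩)
  · exact hb (h.subset (by simp))
  · exact hab rfl

lemma pair_sublist_ofFn_iff {a b : α} : ∀ {n : ℕ} (f : Fin n → α),
    [a, b] <+ ofFn f ↔ ∃ i j, i < j ∧ f i = a ∧ f j = b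
  | 0, f => by simp
  | n + 1, f => by
    rw [ofFn_succ, pair_sublist_cons_iff, pair_sublist_ofFn_iff, mem_ofFn]
    simp [Fin.exists_fin_succ, Fin.succ_pos, eq_comm, or_comm]

lemma sublist_cons_iff_of_notMem {z : α} {l w : List α} (hz : z ∉ l) :
    l <+ z :: w ↔ l <+ w := by
  rw [sublist_cons_iff]
  exact or_iff_left (by rintro ⟨r, rfl, -⟩; simp at hz)

lemma perm_cons_of_mem_permutations'Aux {z : α} {w u : List α}
    (hu : u ∈ w.permutations'Aux z) : u ~ z :: w :=
  mem_permutations'.mp (mem_flatMap.mpr ⟨w, mem_permutations'.mpr (.refl w), hu⟩)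

lemma sublist_iff_of_mem_permutations'Aux {z : α} :
    ∀ {w u l : List α}, z ∉ l → u ∈ w.permutations'Aux z → (l <+ u ↔ l <+ w)
  | [], u, l, hl, hu => by
    obtain rfl : u = [z] := by simpa [permutations'Aux] using hu
    exact sublist_cons_iff_of_notMem hl
  | y :: w, u, l, hl, hu => by
    simp only [permutations'Aux, mem_cons, mem_map] at hu
    rcases hu with rfl | ⟨u, hu, rfl⟩
    · exact sublist_cons_iff_of_notMem hl
    · simp only [sublist_cons_iff]
      refine or_congr (sublist_iff_of_mem_permutations'Aux hl hu) (exists_congr fun r => ?_)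
      exact and_congr_right fun hr =>
        sublist_iff_of_mem_permutations'Aux (fun h => hl (hr ▸ mem_cons_of_mem y h)) hu

end List

namespace ZMod

variable {n : ℕ}

lemma natCast_injOn_range : Set.InjOn (Nat.cast : ℕ → ZMod n) (Finset.range n) :=
  fun a ha b hb h => by
    rw [Finset.coe_range, Set.mem_Iio] at ha hb
    rw [← val_cast_of_lt ha, ← val_cast_of_lt hb, h]

lemma natCast_ne_zero_of_lt {k : ℕ} (h0 : k ≠ 0) (hk : k < n) : (k : ZMod n) ≠ 0 := by
  rw [Ne, natCast_eq_zero_iff]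
  exact fun h => h0 (Nat.eq_zero_of_dvd_of_lt h hk)

variable [NeZero n]

lemma image_add_natCast_range (a : ZMod n) :
    (Finset.range n).image (fun j : ℕ => a + j) = Finset.univ :=
  Finset.eq_univ_of_forall fun t =>
    Finset.mem_image.mpr ⟨(t - a).val, Finset.mem_range.mpr (val_lt _), by simp⟩

lemma image_add_natCast_range_sub_one (a : ZMod n) :
    (Finset.range (n - 1)).image (fun j : ℕ => a + j) = Finset.univ.erase (a - 1) := by
  have hinj : Set.InjOn (fun j : ℕ => a + j) (Finset.range (n - 1)) := fun i hi j hj h =>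
    natCast_injOn_range (by simp at hi ⊢; omega) (by simp at hj ⊢; omega) (add_left_cancel h)
  refine Finset.eq_of_subset_of_card_le (fun t ht => ?_) ?_
  · obtain ⟨j, hj, rfl⟩ := Finset.mem_image.mp ht
    refine Finset.mem_erase.mpr ⟨fun h => ?_, Finset.mem_univ _⟩
    have := natCast_ne_zero_of_lt (n := n) j.succ_ne_zero (by simp at hj; omega)
    push_cast at this
    exact this (by linear_combination h)
  · rw [Finset.card_image_of_injOn hinj, Finset.card_erase_of_mem (Finset.mem_univ _),
      Finset.card_univ, card, Finset.card_range]

end ZMod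

namespace SimpleGraph

variable {V : Type} {G : SimpleGraph V}

lemma Connected.exists_isCycle_forall_mem_support [Finite V] (hconn : G.Connected)
    (h2 : ∀ v, (G.neighborSet v).ncard = 2) :
    ∃ (v : V) (p : G.Walk v v), p.IsCycle ∧ ∀ w, w ∈ p.support := by
  obtain ⟨v⟩ := hconn.nonempty
  have hne : (G.neighborSet v).Nonempty := Set.nonempty_of_ncard_ne_zero (by simp [h2])
  obtain ⟨p, hp, hverts⟩ := IsCycles.exists_cycle_toSubgraph_verts_eq_connectedComponentSupp
    (fun w _ => h2 w) (ConnectedComponent.mem_supp_iff _ v |>.mpr rfl) hne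
  refine ⟨v, p, hp, fun w => ?_⟩
  rw [← Walk.mem_verts_toSubgraph, hverts, ConnectedComponent.mem_supp_iff,
    ConnectedComponent.eq]
  exact hconn.preconnected w v

lemma Walk.getVert_val_add_one {v : V} (p : G.Walk v v) [NeZero p.length] (i : ZMod p.length) :
    p.getVert (i + 1).val = p.getVert (i.val + 1) := by
  have hval : (i + 1).val = (i.val + 1) % p.length := by
    rw [ZMod.val_add, ZMod.val_one_eq_one_mod, Nat.add_mod_mod]
  rcases (Nat.lt_iff_add_one_le.mp (ZMod.val_lt i)).lt_or_eq with h | h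
  · rw [hval, Nat.mod_eq_of_lt h]
  · rw [hval, h, Nat.mod_self, Walk.getVert_zero, Walk.getVert_length]

lemma Connected.exists_equiv_zmod_adj_iff [Fintype V] (hconn : G.Connected)
    (h2 : ∀ v, (G.neighborSet v).ncard = 2) :
    ∃ (n : ℕ) (_ : NeZero n) (c : ZMod n ≃ V), 3 ≤ n ∧
      ∀ a b, G.Adj a b ↔ ∃ i, s(c i, c (i + 1)) = s(a, b) := by
  classical
  obtain ⟨v, p, hp, hsupp⟩ := hconn.exists_isCycle_forall_mem_support h2
  have hn := hp.three_le_length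
  have : NeZero p.length := ⟨by omega⟩
  let c : ZMod p.length → V := fun i => p.getVert i.val
  have hsucc : ∀ i, c (i + 1) = p.getVert (i.val + 1) := p.getVert_val_add_one
  have hc : Function.Bijective c := by
    refine ⟨fun i j h => ZMod.val_injective _ (hp.getVert_injOn' ?_ ?_ h), fun w => ?_⟩
    · have := ZMod.val_lt i; simp only [Set.mem_ofPred_eq]; omega
    · have := ZMod.val_lt j; simp only [Set.mem_ofPred_eq]; omega
    obtain ⟨k, rfl, hk⟩ := Walk.mem_support_iff_exists_getVert.mp (hsupp w)
    rcases hk.lt_or_eq with hk | rfl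
    · exact ⟨k, by simp [c, ZMod.val_cast_of_lt hk]⟩
    · exact ⟨0, by simp [c]⟩
  refine ⟨p.length, inferInstance, Equiv.ofBijective c hc, hn, fun a b => ?_⟩
  simp only [Equiv.ofBijective_apply]
  constructor
  · intro hab
    have hpab : p.toSubgraph.Adj a b :=
      (hp.adj_toSubgraph_iff_of_isCycles (fun w _ => h2 w)
        (Walk.mem_verts_toSubgraph _ |>.mpr (hsupp a)) b).mpr hab
    obtain ⟨k, hk, hkl⟩ := (Walk.toSubgraph_adj_iff p).mp hpab
    refine ⟨k, ?_⟩
    rw [hsucc]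
    simpa [c, ZMod.val_cast_of_lt hkl] using hk
  · rintro ⟨i, hi⟩
    have hadj : G.Adj (c i) (c (i + 1)) := hsucc i ▸ p.adj_getVert_succ (ZMod.val_lt i)
    rcases Sym2.eq_iff.mp hi with ⟨rfl, rfl⟩ | ⟨rfl, rfl⟩
    exacts [hadj, hadj.symm]

end SimpleGraph

open Finset in
/-- With total degree `2`, a vertex is minimal iff its out-degree is `2`, and maximal iff its
out-degree is `0`. -/
lemma two_mul_sum_minimal_sub_sum_maximal {V R : Type*} [Fintype V] [DecidableEq V] [CommRing R]
    (E : Finset (V × V)) (hdeg : ∀ v : V, #{e ∈ E | e.1 = v} + #{e ∈ E | e.2 = v} = 2)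
    (f : V → R) :
    2 * ((∑ v ∈ univ.filter (fun v : V => ∀ e ∈ E, e.2 ≠ v), f v) -
        ∑ v ∈ univ.filter (fun v : V => ∀ e ∈ E, e.1 ≠ v), f v) =
      ∑ e ∈ E, (f e.1 - f e.2) := by
  rw [sum_sub_distrib, ← sum_fiberwise' E Prod.fst f, ← sum_fiberwise' E Prod.snd f, sum_filter,
    sum_filter, ← sum_sub_distrib, ← sum_sub_distrib, mul_sum]
  refine sum_congr rfl fun v _ => ?_
  have hmin : (∀ e ∈ E, e.2 ≠ v) ↔ #{e ∈ E | e.2 = v} = 0 := by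
    rw [card_eq_zero, filter_eq_empty_iff]
  have hmax : (∀ e ∈ E, e.1 ≠ v) ↔ #{e ∈ E | e.1 = v} = 0 := by
    rw [card_eq_zero, filter_eq_empty_iff]
  rw [if_congr hmin rfl rfl, if_congr hmax rfl rfl, sum_const, sum_const]
  have := hdeg v
  rcases (by omega : #{e ∈ E | e.1 = v} = 0 ∧ #{e ∈ E | e.2 = v} = 2 ∨
      #{e ∈ E | e.1 = v} = 1 ∧ #{e ∈ E | e.2 = v} = 1 ∨
      #{e ∈ E | e.1 = v} = 2 ∧ #{e ∈ E | e.2 = v} = 0) with ⟨h₁, h₂⟩ | ⟨h₁, h₂⟩ | ⟨h₁, h₂⟩ <;>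
    simp only [h₁, h₂] <;> norm_num

section Words

variable {V : Type}

lemma xv_injective : Function.Injective (xv (V := V)) :=
  (IsFractionRing.injective (MvPolynomial V ℚ) (K V)).comp MvPolynomial.X_injective

lemma xv_sub_ne_zero {a b : V} (h : a ≠ b) : xv a - xv b ≠ 0 :=
  sub_ne_zero.mpr (xv_injective.ne h)

lemma psi_singleton (a : V) : psi [a] = 1 := by simp [psi]

lemma psi_cons_cons (a b : V) (t : List V) :
    psi (a :: b :: t) = (xv a - xv b)⁻¹ * psi (b :: t) := by
  simp [psi, mul_comm]

lemma sum_psi_cons_permutations'Aux {z : V} :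
    ∀ {m : V} {v : List V}, (m :: v).Nodup → z ∉ m :: v →
      ((v.permutations'Aux z).map fun u => psi (m :: u)).sum = psi (m :: v) * (xv m - xv z)⁻¹
  | m, [], _, _ => by simp [List.permutations'Aux, psi_cons_cons, psi_singleton]
  | m, b :: t, hv, hz => by
    have hmb : xv m - xv b ≠ 0 := xv_sub_ne_zero fun h => by simp [h] at hv
    have hmz : xv m - xv z ≠ 0 := xv_sub_ne_zero fun h => by simp [h] at hz
    have hzb : xv z - xv b ≠ 0 := xv_sub_ne_zero fun h => by simp [h] at hz
    have hbz : xv b - xv z ≠ 0 := xv_sub_ne_zero fun h => by simp [h] at hz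
    have ih := sum_psi_cons_permutations'Aux hv.of_cons fun h => hz (List.mem_cons_of_mem m h)
    simp only [List.permutations'Aux, List.map_cons, List.map_map, Function.comp_def,
      List.sum_cons, psi_cons_cons, List.sum_map_mul_left, ih]
    -- partial fractions: `1/((m-z)(z-b)) + 1/((m-b)(b-z)) = 1/((m-b)(m-z))`
    field_simp
    ring

lemma sum_psi_permutations'Aux_eq_zero {z : V} {w : List V} (hw : w.Nodup) (hne : w ≠ [])
    (hz : z ∉ w) : ((w.permutations'Aux z).map psi).sum = 0 := by
  obtain ⟨m, v, rfl⟩ := List.exists_cons_of_ne_nil hne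
  have hmz : xv m - xv z ≠ 0 := xv_sub_ne_zero fun h => hz (h ▸ List.mem_cons_self)
  have hzm : xv z - xv m ≠ 0 := xv_sub_ne_zero fun h => hz (h ▸ List.mem_cons_self)
  simp only [List.permutations'Aux, List.map_cons, List.map_map, Function.comp_def,
    List.sum_cons, sum_psi_cons_permutations'Aux hw hz, psi_cons_cons]
  field_simp
  ring

lemma wordOf_eq_ofFn (W : Finset V) (σ : Fin W.card ≃ W) :
    wordOf W σ = List.ofFn fun i => (σ i : V) :=
  List.ofFn_eq_map.symm

lemma mem_wordOf {W : Finset V} (σ : Fin W.card ≃ W) {x : V} : x ∈ wordOf W σ ↔ x ∈ W := by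
  simp only [wordOf_eq_ofFn, List.mem_ofFn]
  exact ⟨by rintro ⟨i, rfl⟩; exact (σ i).2, fun hx => ⟨σ.symm ⟨x, hx⟩, by simp⟩⟩

lemma nodup_wordOf (W : Finset V) (σ : Fin W.card ≃ W) : (wordOf W σ).Nodup := by
  rw [wordOf_eq_ofFn, List.nodup_ofFn]
  exact Subtype.val_injective.comp σ.injective

lemma wordOf_injective (W : Finset V) : Function.Injective (wordOf W) := fun σ τ h => by
  rw [wordOf_eq_ofFn, wordOf_eq_ofFn] at h
  exact Equiv.ext fun i => Subtype.ext (congrFun (List.ofFn_injective h) i)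

lemma exists_wordOf_eq {W : Finset V} {w : List V} (hw : w.Nodup) (hW : ∀ x, x ∈ w ↔ x ∈ W) :
    ∃ σ, wordOf W σ = w := by
  classical
  have hlen : W.card = w.length := by
    rw [← List.toFinset_card_of_nodup hw]; congr 1; ext x; simp [hW]
  let f : Fin W.card → W := fun i => ⟨w[i.val], (hW _).mp (List.getElem_mem _)⟩
  have hf : Function.Bijective f := by
    refine ⟨fun i j h => Fin.ext ?_, fun x => ?_⟩
    · exact hw.getElem_inj_iff.mp (congrArg Subtype.val h)
    · obtain ⟨k, hk, hkx⟩ := List.getElem_of_mem ((hW x).mpr x.2)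
      exact ⟨⟨k, hlen ▸ hk⟩, Subtype.ext hkx⟩
  refine ⟨Equiv.ofBijective f hf, ?_⟩
  rw [wordOf_eq_ofFn]
  exact List.ext_getElem (by simp [hlen]) fun k _ _ => by simp [f]

lemma exists_lt_iff_symm_lt {W : Finset V} (σ : Fin W.card ≃ W) {a b : V} (ha : a ∈ W)
    (hb : b ∈ W) :
    (∃ i j, i < j ∧ (σ i : V) = a ∧ (σ j : V) = b) ↔ σ.symm ⟨a, ha⟩ < σ.symm ⟨b, hb⟩ := by
  refine ⟨fun ⟨i, j, hij, hi, hj⟩ => ?_, fun h => ⟨_, _, h, by simp, by simp⟩⟩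
  rwa [σ.symm_apply_eq.mpr (Subtype.ext hi).symm, σ.symm_apply_eq.mpr (Subtype.ext hj).symm]

lemma IsExt.exists_lt_of_transGen {W : Finset V} {E : Finset (V × V)} {σ : Fin W.card ≃ W}
    (hσ : IsExt W E σ) {a b : V} (hab : Relation.TransGen (fun a b => (a, b) ∈ E) a b) :
    ∃ i j, i < j ∧ (σ i : V) = a ∧ (σ j : V) = b := by
  induction hab with
  | single h => exact hσ _ h
  | tail _ hbc ih =>
    obtain ⟨i, j, hij, hi, hj⟩ := ih
    obtain ⟨j', k, hjk, hj', hk⟩ := hσ _ hbc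
    obtain rfl : j = j' := σ.injective (Subtype.ext (hj.trans hj'.symm))
    exact ⟨i, k, hij.trans hjk, hi, hk⟩

def RespectsEdges (E : Finset (V × V)) (w : List V) : Prop :=
  ∀ e ∈ E, [e.1, e.2] <+ w

lemma respectsEdges_iff_of_mem_permutations'Aux {E : Finset (V × V)} {z : V} {w u : List V}
    (hE : ∀ e ∈ E, e.1 ≠ z ∧ e.2 ≠ z) (hu : u ∈ w.permutations'Aux z) :
    RespectsEdges E u ↔ RespectsEdges E w :=
  forall₂_congr fun e he => List.sublist_iff_of_mem_permutations'Aux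
    (by simp [(hE e he).1.symm, (hE e he).2.symm]) hu

lemma isExt_iff_respectsEdges (W : Finset V) (E : Finset (V × V)) (σ : Fin W.card ≃ W) :
    IsExt W E σ ↔ RespectsEdges E (wordOf W σ) := by
  simp only [IsExt, RespectsEdges, wordOf_eq_ofFn, List.pair_sublist_ofFn_iff]

end Words

section LinearExtensions

variable {V : Type} [DecidableEq V]

lemma sum_psi_cons_permutations'Aux_of_pair_sublist {m z : V} :
    ∀ {y : V} {w : List V}, (y :: w).Nodup → z ∉ y :: w → m ∈ y :: w →
      ((w.permutations'Aux z).map fun u => if [m, z] <+ y :: u then psi (y :: u) else 0).sum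
        = psi (y :: w) * (xv m - xv z)⁻¹ := by
  intro y w hw hz hm
  have hmz : m ≠ z := by rintro rfl; exact hz hm
  by_cases hym : y = m
  · subst hym
    rw [← sum_psi_cons_permutations'Aux hw hz]
    refine congrArg List.sum (List.map_congr_left fun u hu => if_pos ?_)
    exact List.pair_sublist_cons_iff.mpr
      (.inr ⟨rfl, (List.perm_cons_of_mem_permutations'Aux hu).mem_iff.mpr List.mem_cons_self⟩)
  · have hsub : ∀ u, [m, z] <+ y :: u ↔ [m, z] <+ u := fun u => by
      rw [List.pair_sublist_cons_iff]; exact or_iff_left fun h => hym h.1.symm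
    obtain ⟨c, t, rfl⟩ : ∃ c t, w = c :: t := List.exists_cons_of_ne_nil (by rintro rfl; simp_all)
    have ih := sum_psi_cons_permutations'Aux_of_pair_sublist (m := m) hw.of_cons
      (fun h => hz (List.mem_cons_of_mem y h)) ((List.mem_cons.mp hm).resolve_left (Ne.symm hym))
    simp only [hsub, List.permutations'Aux, List.map_cons, List.map_map, Function.comp_def,
      List.sum_cons, psi_cons_cons y c] at ih ⊢
    rw [if_neg (List.not_pair_sublist_cons hmz fun h => hz (List.mem_cons_of_mem y h)), zero_add,
      mul_assoc, ← ih, ← List.sum_map_mul_left]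
    simp only [mul_ite, mul_zero]

lemma sum_psi_permutations'Aux_of_pair_sublist {m z : V} {w : List V} (hw : w.Nodup)
    (hz : z ∉ w) (hm : m ∈ w) :
    ((w.permutations'Aux z).map fun u => if [m, z] <+ u then psi u else 0).sum
      = psi w * (xv m - xv z)⁻¹ := by
  obtain ⟨y, w, rfl⟩ := List.exists_cons_of_ne_nil (List.ne_nil_of_mem hm)
  have hmz : m ≠ z := by rintro rfl; exact hz hm
  simp only [List.permutations'Aux, List.map_cons, List.map_map, Function.comp_def, List.sum_cons,
    if_neg (List.not_pair_sublist_cons hmz hz), zero_add]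
  exact sum_psi_cons_permutations'Aux_of_pair_sublist hw hz hm

instance (E : Finset (V × V)) (w : List V) : Decidable (RespectsEdges E w) := by
  unfold RespectsEdges; infer_instance

lemma respectsEdges_insert {e : V × V} {E : Finset (V × V)} {w : List V} :
    RespectsEdges (insert e E) w ↔ [e.1, e.2] <+ w ∧ RespectsEdges E w :=
  Finset.forall_mem_insert _ _ _

lemma PsiG_toFinset {L : List V} (hL : L.Nodup) (E : Finset (V × V)) :
    PsiG L.toFinset E
      = (L.permutations'.map fun w => if RespectsEdges E w then psi w else 0).sum := by
  have hperm : L.permutations'.Nodup :=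
    (List.permutations_perm_permutations' L).nodup_iff.mp (List.nodup_permutations L hL)
  rw [← List.sum_toFinset _ hperm, PsiG]
  refine Finset.sum_bij (fun σ _ => wordOf L.toFinset σ) (fun σ _ => ?_)
    (fun σ _ τ _ h => wordOf_injective _ h) (fun w hw => ?_) (fun σ _ => ?_)
  · rw [List.mem_toFinset, List.mem_permutations']
    exact List.perm_of_nodup_nodup_toFinset_eq (nodup_wordOf _ σ) hL
      (Finset.ext fun x => by rw [List.mem_toFinset, mem_wordOf])
  · rw [List.mem_toFinset, List.mem_permutations'] at hw
    obtain ⟨σ, hσ⟩ := exists_wordOf_eq (hw.nodup_iff.mpr hL) fun x => by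
      rw [hw.mem_iff, List.mem_toFinset]
    exact ⟨σ, Finset.mem_univ σ, hσ⟩
  · simp only [isExt_iff_respectsEdges]

lemma PsiG_insert_eq_sum {L : List V} {z : V} (hL : (z :: L).Nodup) (E : Finset (V × V)) :
    PsiG (insert z L.toFinset) E = (L.permutations'.map fun w =>
      ((w.permutations'Aux z).map fun u => if RespectsEdges E u then psi u else 0).sum).sum := by
  rw [← List.toFinset_cons, PsiG_toFinset hL, List.permutations', List.map_flatMap,
    List.flatMap_def, List.sum_flatten, List.map_map]
  rfl

lemma PsiG_singleton (a : V) : PsiG {a} ∅ = 1 := by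
  rw [show ({a} : Finset V) = [a].toFinset by simp, PsiG_toFinset (List.nodup_singleton a)]
  simp [List.permutations', List.permutations'Aux, RespectsEdges, psi_singleton]

lemma PsiG_insert_isolated {W : Finset V} {E : Finset (V × V)} {z : V} (hz : z ∉ W)
    (hW : W.Nonempty) (hE : ∀ e ∈ E, e.1 ≠ z ∧ e.2 ≠ z) : PsiG (insert z W) E = 0 := by
  obtain ⟨L, hL, rfl⟩ := W.exists_list_nodup_eq
  rw [PsiG_insert_eq_sum (List.nodup_cons.mpr ⟨by simpa using hz, hL⟩)]
  refine List.sum_eq_zero fun x hx => ?_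
  obtain ⟨w, hw, rfl⟩ := List.mem_map.mp hx
  have hwL := List.mem_permutations'.mp hw
  rw [List.map_congr_left fun u hu =>
    if_congr (respectsEdges_iff_of_mem_permutations'Aux hE hu) rfl rfl]
  split_ifs
  · refine sum_psi_permutations'Aux_eq_zero (hwL.nodup_iff.mpr hL) ?_
      (by simpa [hwL.mem_iff] using hz)
    rintro rfl
    simp [List.nil_perm.mp hwL] at hW
  · simp

lemma PsiG_insert_leaf_after {W : Finset V} {E : Finset (V × V)} {m z : V} (hz : z ∉ W)
    (hm : m ∈ W) (hE : ∀ e ∈ E, e.1 ≠ z ∧ e.2 ≠ z) :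
    PsiG (insert z W) (insert (m, z) E) = PsiG W E * (xv m - xv z)⁻¹ := by
  obtain ⟨L, hL, rfl⟩ := W.exists_list_nodup_eq
  rw [PsiG_insert_eq_sum (List.nodup_cons.mpr ⟨by simpa using hz, hL⟩), PsiG_toFinset hL,
    ← List.sum_map_mul_right]
  refine congrArg List.sum (List.map_congr_left fun w hw => ?_)
  have hwL := List.mem_permutations'.mp hw
  rw [List.map_congr_left fun u hu => if_congr (respectsEdges_insert.trans
    (and_congr_right' (respectsEdges_iff_of_mem_permutations'Aux hE hu))) rfl rfl]
  by_cases hwE : RespectsEdges E w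
  · simp only [hwE, and_true, if_true]
    exact sum_psi_permutations'Aux_of_pair_sublist (hwL.nodup_iff.mpr hL)
      (by simpa [hwL.mem_iff] using hz) (by simpa [hwL.mem_iff] using hm)
  · simp [hwE]

lemma PsiG_insert_add_PsiG_insert_swap {W : Finset V} {F : Finset (V × V)} {a b : V}
    (ha : a ∈ W) (hb : b ∈ W) (hab : a ≠ b) :
    PsiG W (insert (a, b) F) + PsiG W (insert (b, a) F) = PsiG W F := by
  rw [PsiG, PsiG, PsiG, ← Finset.sum_add_distrib]
  refine Finset.sum_congr rfl fun σ _ => ?_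
  simp only [IsExt, Finset.forall_mem_insert, exists_lt_iff_symm_lt σ ha hb,
    exists_lt_iff_symm_lt σ hb ha]
  have hne : σ.symm ⟨a, ha⟩ ≠ σ.symm ⟨b, hb⟩ := by simpa using hab
  rcases hne.lt_or_gt with h | h <;>
    simp only [h, h.not_gt, true_and, false_and, if_false, add_zero, zero_add]

lemma PsiG_eq_zero_of_not_acyclic (W : Finset V) {E : Finset (V × V)} (hE : ¬Acyclic E) :
    PsiG W E = 0 := by
  obtain ⟨v, hv⟩ := not_forall_not.mp hE
  refine Finset.sum_eq_zero fun σ _ => if_neg fun hσ => ?_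
  obtain ⟨i, j, hij, hi, hj⟩ := hσ.exists_lt_of_transGen hv
  exact hij.ne (σ.injective (Subtype.ext (hi.trans hj.symm)))

lemma PsiG_insert_leaf_before {W : Finset V} {E : Finset (V × V)} {m z : V} (hz : z ∉ W)
    (hm : m ∈ W) (hE : ∀ e ∈ E, e.1 ≠ z ∧ e.2 ≠ z) :
    PsiG (insert z W) (insert (z, m) E) = PsiG W E * (xv z - xv m)⁻¹ := by
  -- `Ψ` vanishes while `z` is isolated, so the two orientations of the new edge cancel.
  have hsplit := PsiG_insert_add_PsiG_insert_swap (F := E) (W.mem_insert_self z)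
    (W.mem_insert_of_mem hm) (by rintro rfl; exact hz hm)
  rw [PsiG_insert_isolated hz ⟨m, hm⟩ hE, PsiG_insert_leaf_after hz hm hE] at hsplit
  rw [← neg_sub, inv_neg, mul_neg]
  linear_combination hsplit

lemma NG_insert_leaf {W : Finset V} {E : Finset (V × V)} {m z : V} {p : V × V} (hz : z ∉ W)
    (hm : m ∈ W) (hE : ∀ e ∈ E, e.1 ≠ z ∧ e.2 ≠ z) (hp : p = (m, z) ∨ p = (z, m)) :
    NG (insert z W) (insert p E) = NG W E := by
  have hmz : m ≠ z := by rintro rfl; exact hz hm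
  have hpE : p ∉ E := fun h => by
    rcases hp with rfl | rfl
    exacts [(hE _ h).2 rfl, (hE _ h).1 rfl]
  have hp0 : xv p.1 - xv p.2 ≠ 0 := by
    rcases hp with rfl | rfl
    exacts [xv_sub_ne_zero hmz, xv_sub_ne_zero hmz.symm]
  have hPsi : PsiG (insert z W) (insert p E) = PsiG W E * (xv p.1 - xv p.2)⁻¹ := by
    rcases hp with rfl | rfl
    exacts [PsiG_insert_leaf_after hz hm hE, PsiG_insert_leaf_before hz hm hE]
  rw [NG, NG, Finset.prod_insert hpE, hPsi]
  field_simp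

lemma NG_path_eq_one (g : ℕ → V) (e : ℕ → V × V) :
    ∀ k, Set.InjOn g (Finset.range (k + 1)) →
      (∀ j < k, e j = (g j, g (j + 1)) ∨ e j = (g (j + 1), g j)) →
      NG ((Finset.range (k + 1)).image g) ((Finset.range k).image e) = 1
  | 0, _, _ => by simp [NG, PsiG_singleton]
  | k + 1, hg, he => by
    have hgk : Set.InjOn g (Finset.range (k + 1)) :=
      hg.mono (by simp [Set.subset_def]; omega)
    have hne : ∀ i ≤ k, g i ≠ g (k + 1) := fun i hi h => by
      have := hg (by simp; omega) (by simp) h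
      omega
    have hz : g (k + 1) ∉ (Finset.range (k + 1)).image g := by
      simpa [Nat.lt_succ_iff] using hne
    have hW : (Finset.range (k + 2)).image g
        = insert (g (k + 1)) ((Finset.range (k + 1)).image g) := by
      rw [Finset.range_add_one, Finset.image_insert]
    have hE : (Finset.range (k + 1)).image e = insert (e k) ((Finset.range k).image e) := by
      rw [Finset.range_add_one, Finset.image_insert]
    rw [hW, hE, NG_insert_leaf hz (Finset.mem_image_of_mem g (by simp)) ?_ (he k (by omega)),
      NG_path_eq_one g e k hgk fun j hj => he j (by omega)]
    simp only [Finset.mem_image, Finset.mem_range, forall_exists_index, and_imp]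
    rintro _ j hj rfl
    rcases he j (by omega) with h | h <;> rw [h] <;> exact ⟨hne _ (by omega), hne _ (by omega)⟩

lemma NG_insert_sub_NG_insert_swap {W : Finset V} {F : Finset (V × V)} {a b : V}
    (hF : NG W F = 1) (ha : a ∈ W) (hb : b ∈ W) (hab : a ≠ b) (h₁ : (a, b) ∉ F)
    (h₂ : (b, a) ∉ F) :
    NG W (insert (a, b) F) - NG W (insert (b, a) F) = xv a - xv b := by
  have hsplit := PsiG_insert_add_PsiG_insert_swap (F := F) ha hb hab
  rw [NG] at hF
  rw [NG, NG, Finset.prod_insert h₁, Finset.prod_insert h₂]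
  linear_combination (xv a - xv b) * (∏ e ∈ F, (xv e.1 - xv e.2)) * hsplit + (xv a - xv b) * hF

end LinearExtensions

section Cycle

variable {V : Type} {n : ℕ}

def cycleEdge (c : ZMod n → V) (s : Finset (ZMod n)) (i : ZMod n) : V × V :=
  if i ∈ s then (c i, c (i + 1)) else (c (i + 1), c i)

lemma cycleEdge_eq_or (c : ZMod n → V) (s : Finset (ZMod n)) (i : ZMod n) :
    cycleEdge c s i = (c i, c (i + 1)) ∨ cycleEdge c s i = (c (i + 1), c i) := by
  unfold cycleEdge; split_ifs <;> simp

lemma cycleEdge_injective (hn : 3 ≤ n) {c : ZMod n → V} (hc : Function.Injective c)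
    (s : Finset (ZMod n)) : Function.Injective (cycleEdge c s) := by
  have two : ((2 : ℕ) : ZMod n) ≠ 0 := ZMod.natCast_ne_zero_of_lt two_ne_zero (by omega)
  intro i j h
  unfold cycleEdge at h
  split_ifs at h <;> obtain ⟨h₁, h₂⟩ := Prod.mk.inj h <;> have h₁ := hc h₁ <;> have h₂ := hc h₂
  all_goals first
    | assumption
    | exact (two (by push_cast; linear_combination h₂ - h₁)).elim
    | exact (two (by push_cast; linear_combination h₁ - h₂)).elim

variable [DecidableEq V] [NeZero n]

def cycleEdges (c : ZMod n → V) (s : Finset (ZMod n)) : Finset (V × V) :=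
  Finset.univ.image (cycleEdge c s)

lemma cycleEdges_eq_insert (c : ZMod n → V) (s : Finset (ZMod n)) (i : ZMod n) :
    cycleEdges c s = insert (cycleEdge c s i) ((Finset.univ.erase i).image (cycleEdge c s)) := by
  rw [cycleEdges, ← Finset.image_insert, Finset.insert_erase (Finset.mem_univ i)]

lemma sum_cycleEdges {R : Type*} [AddCommMonoid R] (hn : 3 ≤ n) (c : ZMod n ≃ V)
    (s : Finset (ZMod n)) (f : V × V → R) :
    ∑ e ∈ cycleEdges c s, f e = ∑ i, f (cycleEdge c s i) :=
  Finset.sum_image fun _ _ _ _ h => cycleEdge_injective hn c.injective s h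

lemma not_acyclic_cycleEdges_empty (c : ZMod n → V) : ¬Acyclic (cycleEdges c ∅) := fun h => by
  have hedge : ∀ i : ZMod n, (c (i + 1), c i) ∈ cycleEdges c ∅ := fun i =>
    Finset.mem_image.mpr ⟨i, Finset.mem_univ _, by simp [cycleEdge]⟩
  have hwalk : ∀ k : ℕ, Relation.TransGen (fun a b => (a, b) ∈ cycleEdges c ∅)
      (c ((k : ZMod n) + 1)) (c 0) := by
    intro k
    induction k with
    | zero => exact .single (by simpa using hedge 0)
    | succ k ih => exact .head (by simpa using hedge ((k : ZMod n) + 1)) ih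
  have := hwalk (n - 1)
  rw [← Nat.cast_add_one, Nat.sub_add_cancel NeZero.one_le, ZMod.natCast_self] at this
  exact h _ this

/-- Deleting the `i`-th edge leaves the path `c (i + 1), c (i + 2), …, c (i + n) = c i`. -/
lemma NG_image_cycleEdge_erase_eq_one [Fintype V] (c : ZMod n ≃ V) (s : Finset (ZMod n))
    (i : ZMod n) : NG Finset.univ ((Finset.univ.erase i).image (cycleEdge c s)) = 1 := by
  have hsucc : ∀ j : ℕ, i + 1 + ((j + 1 : ℕ) : ZMod n) = i + 1 + j + 1 := fun j => by
    push_cast; ring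
  have hpath := NG_path_eq_one (fun j => c (i + 1 + j)) (fun j => cycleEdge c s (i + 1 + j))
    (n - 1)
    (by
      rw [Nat.sub_add_cancel NeZero.one_le]
      exact fun a ha b hb h => ZMod.natCast_injOn_range ha hb (add_left_cancel (c.injective h)))
    (fun j _ => by simpa only [hsucc] using cycleEdge_eq_or c s (i + 1 + j))
  rw [Nat.sub_add_cancel NeZero.one_le] at hpath
  change NG (Finset.image (c ∘ fun j : ℕ => i + 1 + (j : ZMod n)) _)
    (Finset.image (cycleEdge c s ∘ fun j : ℕ => i + 1 + (j : ZMod n)) _) = 1 at hpath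
  rwa [← Finset.image_image, ← Finset.image_image, ZMod.image_add_natCast_range,
    ZMod.image_add_natCast_range_sub_one, add_sub_cancel_right, Finset.image_univ_equiv] at hpath

theorem two_mul_NG_cycleEdges [Fintype V] (hn : 3 ≤ n) (c : ZMod n ≃ V) (s : Finset (ZMod n)) :
    2 * NG Finset.univ (cycleEdges c s) = ∑ e ∈ cycleEdges c s, (xv e.1 - xv e.2) := by
  induction s using Finset.induction_on with
  | empty =>
    rw [NG, PsiG_eq_zero_of_not_acyclic _ (not_acyclic_cycleEdges_empty c), sum_cycleEdges hn]
    simp only [cycleEdge, Finset.notMem_empty, if_false, Finset.sum_sub_distrib, zero_mul,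
      mul_zero]
    exact (sub_eq_zero.mpr (Equiv.sum_comp (Equiv.addRight 1) fun i => xv (c i))).symm
  | insert i s hi ih =>
    have hinj := cycleEdge_injective hn c.injective
    have hF : (Finset.univ.erase i).image (cycleEdge c (insert i s))
        = (Finset.univ.erase i).image (cycleEdge c s) :=
      Finset.image_congr fun j hj => by simp [cycleEdge, (Finset.mem_erase.mp hj).1]
    have h₁ : (c i, c (i + 1)) ∉ (Finset.univ.erase i).image (cycleEdge c s) := by
      rw [← hF, show (c i, c (i + 1)) = cycleEdge c (insert i s) i by simp [cycleEdge],
        (hinj _).mem_finset_image]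
      simp
    have h₂ : (c (i + 1), c i) ∉ (Finset.univ.erase i).image (cycleEdge c s) := by
      rw [show (c (i + 1), c i) = cycleEdge c s i by simp [cycleEdge, hi],
        (hinj _).mem_finset_image]
      simp
    have hne : c i ≠ c (i + 1) := c.injective.ne
      (by simpa using ZMod.natCast_ne_zero_of_lt one_ne_zero (by omega : 1 < n))
    have hflip := NG_insert_sub_NG_insert_swap (NG_image_cycleEdge_erase_eq_one c s i)
      (Finset.mem_univ _) (Finset.mem_univ _) hne h₁ h₂
    rw [cycleEdges_eq_insert c s i, show cycleEdge c s i = (c (i + 1), c i) by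
      simp [cycleEdge, hi], Finset.sum_insert h₂] at ih
    rw [cycleEdges_eq_insert c _ i, hF, show cycleEdge c (insert i s) i = (c i, c (i + 1)) by
      simp [cycleEdge], Finset.sum_insert h₁]
    linear_combination 2 * hflip + ih

end Cycle

section Graph

variable {V : Type} {E : Finset (V × V)}

lemma undirected_adj {a b : V} :
    (undirected E).Adj a b ↔ a ≠ b ∧ ((a, b) ∈ E ∨ (b, a) ∈ E) :=
  SimpleGraph.fromRel_adj _ a b

lemma Acyclic.fst_ne_snd (hE : Acyclic E) {a b : V} (h : (a, b) ∈ E) : a ≠ b := by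
  rintro rfl
  exact hE a (.single h)

lemma Acyclic.swap_notMem (hE : Acyclic E) {a b : V} (h : (a, b) ∈ E) : (b, a) ∉ E :=
  fun h' => hE a (.tail (.single h) h')

variable [DecidableEq V]

open Finset in
lemma ncard_neighborSet_undirected (hE : Acyclic E) (v : V) :
    ((undirected E).neighborSet v).ncard = #{e ∈ E | e.1 = v} + #{e ∈ E | e.2 = v} := by
  have hset : (undirected E).neighborSet v
      = ↑({e ∈ E | e.1 = v}.image Prod.snd ∪ {e ∈ E | e.2 = v}.image Prod.fst) := by
    ext u
    simp only [SimpleGraph.mem_neighborSet, undirected_adj, coe_union, coe_image, coe_filter,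
      Set.mem_union, Set.mem_image, Set.mem_ofPred_eq, Prod.exists]
    constructor
    · rintro ⟨-, h | h⟩
      exacts [.inl ⟨v, u, ⟨h, rfl⟩, rfl⟩, .inr ⟨u, v, ⟨h, rfl⟩, rfl⟩]
    · rintro (⟨a, b, ⟨h, rfl⟩, rfl⟩ | ⟨a, b, ⟨h, rfl⟩, rfl⟩)
      exacts [⟨hE.fst_ne_snd h, .inl h⟩, ⟨(hE.fst_ne_snd h).symm, .inr h⟩]
  rw [hset, Set.ncard_coe_finset, card_union_of_disjoint, card_image_of_injOn, card_image_of_injOn]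
  · exact fun e he e' he' h => Prod.ext h ((mem_filter.mp he).2.trans (mem_filter.mp he').2.symm)
  · exact fun e he e' he' h => Prod.ext ((mem_filter.mp he).2.trans (mem_filter.mp he').2.symm) h
  · rw [disjoint_left]
    simp only [mem_image, mem_filter, not_exists, not_and, forall_exists_index, and_imp]
    rintro _ ⟨a, b⟩ h rfl rfl ⟨a', b'⟩ h' rfl rfl
    exact hE.swap_notMem h h'

lemma exists_cycleEdges_eq [Fintype V] (hconn : (undirected E).Connected) (hE : Acyclic E)
    (hdeg : ∀ v : V,
      (E.filter fun e => e.1 = v).card + (E.filter fun e => e.2 = v).card = 2) :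
    ∃ (n : ℕ) (_ : NeZero n) (c : ZMod n ≃ V) (s : Finset (ZMod n)),
      3 ≤ n ∧ E = cycleEdges c s := by
  obtain ⟨n, _, c, hn, hadj⟩ :=
    hconn.exists_equiv_zmod_adj_iff fun v => (ncard_neighborSet_undirected hE v).trans (hdeg v)
  refine ⟨n, inferInstance, c, Finset.univ.filter fun i => (c i, c (i + 1)) ∈ E, hn, ?_⟩
  ext ⟨a, b⟩
  simp only [cycleEdges, Finset.mem_image, Finset.mem_univ, true_and]
  constructor
  · intro h
    obtain ⟨i, hi⟩ := (hadj a b).mp (undirected_adj.mpr ⟨hE.fst_ne_snd h, .inl h⟩)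
    refine ⟨i, ?_⟩
    rcases Sym2.eq_iff.mp hi with ⟨rfl, rfl⟩ | ⟨rfl, rfl⟩
    · simp [cycleEdge, h]
    · simp [cycleEdge, hE.swap_notMem h]
  · rintro ⟨i, hi⟩
    rw [← hi]
    by_cases hi : (c i, c (i + 1)) ∈ E
    · simp [cycleEdge, hi]
    · have := (undirected_adj.mp ((hadj _ _).mpr ⟨i, rfl⟩)).2.resolve_left hi
      simpa [cycleEdge, hi] using this

end Graph

/-- for a connected circuit-free graph all of whose vertices have
total degree 2, `N(G) = Σ_{v minimal} x_v - Σ_{v' maximal} x_{v'}`. -/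
theorem NG_of_one_cycle (V : Type) [Fintype V] [DecidableEq V] (E : Finset (V × V))
    (hconn : (undirected E).Connected) (hacyc : Acyclic E)
    (hdeg : ∀ v : V,
      (E.filter fun e => e.1 = v).card + (E.filter fun e => e.2 = v).card = 2) :
    NG (Finset.univ : Finset V) E =
      (∑ v ∈ Finset.univ.filter (fun v : V => ∀ e ∈ E, e.2 ≠ v), xv v) -
        ∑ v ∈ Finset.univ.filter (fun v : V => ∀ e ∈ E, e.1 ≠ v), xv v := by
  obtain ⟨n, _, c, s, hn, rfl⟩ := exists_cycleEdges_eq hconn hacyc hdeg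
  refine mul_left_cancel₀ (two_ne_zero : (2 : K V) ≠ 0) ?_
  rw [two_mul_NG_cycleEdges hn c s, two_mul_sum_minimal_sub_sum_maximal _ hdeg]
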